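/- arXiv:1705.03775 — 6 statements merged into one kernel-verified Lean document; each statement's English description precedes it below -/
import Mathlib

section
/- Let p be a prime and write t = α·p^l with gcd(α,p) = 1, l ≥ 1, and suppose h > l ≥ 1 and p^h(p^h + α·p^l - 1) - α·p^l + α^2·p^{2l} = α·p^l·q for some positive integer q that is a power of p. Then a contradiction follows (i.e., no such parameters exist). -/
theorem stmt_1 (p α l h t q k : ℕ) (hp : p.Prime) (ht : t = α * p ^ l)
    (hα : Nat.gcd α p = 1) (hl : 1 ≤ l) (hlh : l < h)
    (hq : 1 ≤ q) (hk : q = p ^ k)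
    (heq : (p : ℤ) ^ h * ((p : ℤ) ^ h + α * p ^ l - 1) - α * p ^ l + α ^ 2 * p ^ (2 * l)
      = α * p ^ l * q) : False := by
  subst hk
  have hp2 : 2 ≤ p := hp.two_le
  have hα1 : 1 ≤ α := by
    rcases Nat.eq_zero_or_pos α with h0 | h1
    · simp [h0] at hα; omega
    · exact h1
  obtain ⟨b, hb⟩ : ∃ b, l = b + 1 := ⟨l - 1, by omega⟩
  obtain ⟨a, ha⟩ : ∃ a, h = l + (a + 1) := ⟨h - l - 1, by omega⟩
  subst ha; subst hb
  have hpl : ((p : ℤ)) ^ (b + 1) ≠ 0 := by positivity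
  push_cast at heq
  have key : (p : ℤ) ^ (a + 1) * ((p : ℤ) ^ (b + 1 + (a + 1)) + α * p ^ (b + 1) - 1)
      + α ^ 2 * p ^ (b + 1) = α * ((p : ℤ) ^ k + 1) := by
    apply mul_left_cancel₀ hpl
    linear_combination heq
  have hdvd : (p : ℤ) ∣ α * ((p : ℤ) ^ k + 1) := by
    rw [← key]
    exact dvd_add (Dvd.dvd.mul_right (dvd_pow_self _ (Nat.succ_ne_zero a)) _)
      (Dvd.dvd.mul_left (dvd_pow_self _ (Nat.succ_ne_zero b)) _)
  have hdvdn : p ∣ α * (p ^ k + 1) := by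
    have := hdvd
    rwa [show ((α : ℤ) * ((p : ℤ) ^ k + 1)) = ((α * (p ^ k + 1) : ℕ) : ℤ) by push_cast; ring,
      Int.natCast_dvd_natCast] at this
  have hcop : Nat.Coprime p α := (Nat.coprime_comm.mp hα)
  have hpq : p ∣ p ^ k + 1 := hcop.dvd_of_dvd_mul_left hdvdn
  rcases Nat.eq_zero_or_pos k with hk0 | hk1
  · subst hk0
    have hp2' : p = 2 := (Nat.prime_dvd_prime_iff_eq hp Nat.prime_two).mp (by simpa using hpq)
    subst hp2'
    push_cast at key
    have h1 : (2 : ℤ) ≤ (2 : ℤ) ^ (a + 1) := by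
      calc (2:ℤ) = 2 ^ 1 := by norm_num
      _ ≤ 2 ^ (a + 1) := pow_le_pow_right₀ (by norm_num) (by omega)
    have h2 : (2 : ℤ) ≤ (2 : ℤ) ^ (b + 1) := by
      calc (2:ℤ) = 2 ^ 1 := by norm_num
      _ ≤ 2 ^ (b + 1) := pow_le_pow_right₀ (by norm_num) (by omega)
    have h3 : (1 : ℤ) ≤ (2 : ℤ) ^ (b + 1 + (a + 1)) := one_le_two.trans (by calc (2:ℤ) = 2^1 := by norm_num
      _ ≤ 2 ^ (b+1+(a+1)) := pow_le_pow_right₀ (by norm_num) (by omega))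
    have hα1' : (1 : ℤ) ≤ (α : ℤ) := by exact_mod_cast hα1
    have hX : (0:ℤ) < (2:ℤ)^(b+1+(a+1)) + α * 2^(b+1) - 1 := by nlinarith
    have hT : (0:ℤ) < (2:ℤ)^(a+1) * ((2:ℤ)^(b+1+(a+1)) + α * 2^(b+1) - 1) :=
      mul_pos (by positivity) hX
    nlinarith [key, hT, mul_le_mul_of_nonneg_left h2 (by positivity : (0:ℤ) ≤ (α:ℤ)^2), hα1']
  · have h1 : p ∣ 1 := (Nat.dvd_add_right (dvd_pow_self p (by omega))).mp hpq
    have := Nat.le_of_dvd one_pos h1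
    omega
end

section
/- Let p be a prime, h ≥ 1, and α a positive integer with gcd(α,p)=1 dividing p^h - 1, such that (p^h + α·p^h - 1) - α + α^2·p^h = α·q where q is a power of p. Then α = p^h - 1 and q = p^{2h}. -/
theorem stmt_2 (p h α q k : ℕ) (hp : p.Prime) (hh : 1 ≤ h) (hα : 1 ≤ α)
    (hgcd : Nat.gcd α p = 1) (hdvd : α ∣ p ^ h - 1) (hq : q = p ^ k)
    (heq : ((p : ℤ) ^ h + α * p ^ h - 1) - α + α ^ 2 * p ^ h = α * q) :
    α = p ^ h - 1 ∧ q = p ^ (2 * h) := by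
  obtain ⟨d, hd⟩ := hdvd
  have hp2 : 2 ≤ p := hp.two_le
  have hple : p ≤ p ^ h := Nat.le_self_pow (by omega) p
  have hph2 : 2 ≤ p ^ h := by omega
  have hd1 : 1 ≤ d := by
    rcases Nat.eq_zero_or_pos d with h0 | h0
    · subst h0; simp at hd; omega
    · exact h0
  have hd' : (α : ℤ) * d = (p : ℤ) ^ h - 1 := by
    have := congrArg (Nat.cast : ℕ → ℤ) hd
    push_cast [Nat.cast_sub (by omega : 1 ≤ p ^ h)] at this
    linarith
  have hαne : (α : ℤ) ≠ 0 := by positivity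
  have hq' : (q : ℤ) = d * (α ^ 2 + α + 1) + α := by
    have hcancel : (α : ℤ) * q = α * (d * (α ^ 2 + α + 1) + α) := by
      linear_combination (-1 : ℤ) * heq - ((α : ℤ) ^ 2 + α + 1) * hd'
    exact mul_left_cancel₀ hαne hcancel
  -- p^h divides d^2 * (q - (d - 1))
  have hdvd2 : (p : ℤ) ^ h ∣ (d : ℤ) ^ 2 * ((q : ℤ) - ((d : ℤ) - 1)) :=
    ⟨(d : ℤ) * (p : ℤ) ^ h - d + d ^ 2, by
      linear_combination (d : ℤ) ^ 2 * hq' +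
        ((d : ℤ) ^ 2 * (α : ℤ) + (d : ℤ) ^ 2 + (d : ℤ) * (p : ℤ) ^ h) * hd'⟩
  have hpd : ¬ p ∣ d := by
    intro hpd
    have h1 : p ∣ p ^ h - 1 := hd ▸ hpd.mul_left α
    have h2 : p ∣ p ^ h := dvd_pow_self p (by omega)
    have : p ∣ 1 := by
      have := Nat.dvd_sub h2 h1
      rwa [Nat.sub_sub_self (by omega)] at this
    exact absurd (Nat.le_of_dvd one_pos this) (by omega)
  have hcop : IsCoprime ((p : ℤ) ^ h) ((d : ℤ) ^ 2) := by
    have h1 : Nat.Coprime p d := (hp.coprime_iff_not_dvd).mpr hpd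
    have h2 : Nat.Coprime (p ^ h) (d ^ 2) := Nat.Coprime.pow h 2 h1
    have := (Nat.isCoprime_iff_coprime).mpr h2
    push_cast at this
    exact this
  have hdvd3 : (p : ℤ) ^ h ∣ (q : ℤ) - ((d : ℤ) - 1) :=
    hcop.dvd_of_dvd_mul_left hdvd2
  have hdle : d ≤ p ^ h - 1 := by
    have : d ≤ α * d := Nat.le_mul_of_pos_left d (by omega)
    omega
  have hdeq1 : d = 1 := by
    by_cases hk : h ≤ k
    · -- p^h ∣ q, so p^h ∣ d - 1, and d - 1 < p^h
      have hq4 : (p : ℤ) ^ h ∣ (q : ℤ) := by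
        have : p ^ h ∣ q := hq ▸ pow_dvd_pow p hk
        exact_mod_cast Int.natCast_dvd_natCast.mpr this
      have hdm : (p : ℤ) ^ h ∣ (d : ℤ) - 1 := by
        have := dvd_sub hq4 hdvd3
        simpa using this
      by_contra hne
      have hpos : 0 < (d : ℤ) - 1 := by
        have : 2 ≤ d := by omega
        exact_mod_cast by omega
      have := Int.le_of_dvd hpos hdm
      have hlt : (d : ℤ) - 1 < (p : ℤ) ^ h := by
        have : (d : ℤ) ≤ (p : ℤ) ^ h - 1 := by exact_mod_cast by omega
        linarith
      linarith
    · -- q < p^h, but 0 < q - (d-1) and p^h divides it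
      exfalso
      have hqlt : q < p ^ h := by
        rw [hq]
        exact Nat.pow_lt_pow_right (by omega) (by omega)
      have hqlt' : (q : ℤ) < (p : ℤ) ^ h := by exact_mod_cast hqlt
      have hpos : 0 < (q : ℤ) - ((d : ℤ) - 1) := by
        have hα1 : (1 : ℤ) ≤ (α : ℤ) := by exact_mod_cast hα
        have hd1' : (1 : ℤ) ≤ (d : ℤ) := by exact_mod_cast hd1
        nlinarith [hq']
      have := Int.le_of_dvd hpos hdvd3
      have hd1' : (1 : ℤ) ≤ (d : ℤ) := by exact_mod_cast hd1
      linarith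
  -- conclude
  subst hdeq1
  have hαeq : α = p ^ h - 1 := by omega
  constructor
  · exact hαeq
  · have hqZ : (q : ℤ) = (p : ℤ) ^ (2 * h) := by
      have : (α : ℤ) = (p : ℤ) ^ h - 1 := by linear_combination hd'
      rw [hq', this]
      rw [pow_mul']
      ring
    exact_mod_cast hqZ
end

section
/- Let p be a prime, h ≥ 1, and α a positive integer with gcd(α,p) = 1 dividing p^h - 1, such that p^h(p^h + α - 1) - α + α^2 = α·q where q is a power of p. Then α = 1 and q = p^{2h}. -/
theorem stmt_3 (p h α q k : ℕ) (hp : p.Prime) (hh : 1 ≤ h) (hα : 1 ≤ α)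
    (hgcd : Nat.gcd α p = 1) (hdvd : α ∣ p ^ h - 1) (hq : q = p ^ k)
    (heq : (p : ℤ) ^ h * ((p : ℤ) ^ h + α - 1) - α + α ^ 2 = α * q) :
    α = 1 ∧ q = p ^ (2 * h) := by
  have hp2 : 2 ≤ p := hp.two_le
  have hph : 2 ≤ p ^ h := by
    calc 2 = 2 ^ 1 := rfl
    _ ≤ p ^ h := Nat.pow_le_pow_left hp2 1 |>.trans (Nat.pow_le_pow_right (by omega) hh)
  -- natural number form of the equation
  have hc : ((α - 1 : ℕ) : ℤ) = (α : ℤ) - 1 := by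
    push_cast [Nat.cast_sub hα]; ring
  have heqN : α * q = p ^ (2 * h) + (α - 1) * (p ^ h + α) := by
    have : ((α * q : ℕ) : ℤ) = ((p ^ (2 * h) + (α - 1) * (p ^ h + α) : ℕ) : ℤ) := by
      push_cast [hc]
      rw [two_mul, pow_add]
      nlinarith [heq]
    exact_mod_cast this
  have hpd : ¬ p ∣ α := by
    intro hd
    have h1 : p ∣ Nat.gcd α p := Nat.dvd_gcd hd dvd_rfl
    rw [hgcd] at h1
    have := Nat.dvd_one.mp h1
    omega
  rcases Nat.lt_or_ge α 2 with h2 | h2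
  · -- α = 1
    have hα1 : α = 1 := by omega
    subst hα1
    simp at heqN
    exact ⟨rfl, by omega⟩
  · exfalso
    have hαle : α ≤ p ^ h - 1 := Nat.le_of_dvd (by omega) hdvd
    have hA : 1 ≤ α - 1 := by omega
    -- q > p ^ h
    have hqgt : p ^ h < q := by
      have h1 : α * q ≥ p ^ (2 * h) + 1 := by
        have : 1 ≤ (α - 1) * (p ^ h + α) := Nat.one_le_iff_ne_zero.mpr (by positivity)
        omega
      have h2h : p ^ (2 * h) = p ^ h * p ^ h := by rw [two_mul, pow_add]
      by_contra hcon
      push_neg at hcon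
      have h3 : α * q ≤ (p ^ h - 1) * p ^ h := Nat.mul_le_mul hαle hcon
      have h4 : (p ^ h - 1) * p ^ h < p ^ h * p ^ h :=
        (Nat.mul_lt_mul_right (show 0 < p ^ h by omega)).mpr (by omega)
      omega
    have hkgt : h < k := by
      subst hq
      exact (Nat.pow_lt_pow_iff_right (by omega)).mp hqgt
    -- p ∣ α - 1
    have hpq : p ∣ q := by subst hq; exact dvd_pow_self p (by omega)
    have hpA : p ∣ α - 1 := by
      have hdsum : p ∣ p ^ (2 * h) + (α - 1) * (p ^ h + α) := heqN ▸ (hpq.mul_left α)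
      have h1 : p ∣ (α - 1) * (p ^ h + α) :=
        (Nat.dvd_add_right (dvd_pow_self p (by omega))).mp hdsum
      rcases hp.dvd_mul.mp h1 with h' | h'
      · exact h'
      · exact absurd ((Nat.dvd_add_right (dvd_pow_self p (by omega))).mp h') hpd
    set v := (α - 1).factorization p with hv
    have hAne : α - 1 ≠ 0 := by omega
    have hvd : p ^ v ∣ α - 1 := Nat.ordProj_dvd _ _
    have hnd : ¬ p ^ (v + 1) ∣ α - 1 := Nat.pow_succ_factorization_not_dvd hAne hp
    have hvlt : v < h := by
      have h1 : p ^ v ≤ α - 1 := Nat.le_of_dvd (by omega) hvd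
      have h2 : α - 1 < p ^ h := by omega
      exact (Nat.pow_lt_pow_iff_right (by omega)).mp (lt_of_le_of_lt h1 h2)
    have hd1 : p ^ (v + 1) ∣ α * q := by
      subst hq
      exact Dvd.dvd.mul_left (pow_dvd_pow p (by omega)) α
    have hd2 : p ^ (v + 1) ∣ p ^ (2 * h) := pow_dvd_pow p (by omega)
    have hd3 : p ^ (v + 1) ∣ (α - 1) * (p ^ h + α) := by
      have hsub := Nat.dvd_sub hd1 hd2
      rw [heqN, Nat.add_sub_cancel_left] at hsub
      exact hsub
    have hcop : Nat.Coprime (p ^ (v + 1)) (p ^ h + α) := by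
      apply Nat.Coprime.pow_left
      rw [hp.coprime_iff_not_dvd]
      intro hd
      exact hpd ((Nat.dvd_add_right (dvd_pow_self p (by omega))).mp hd)
    exact hnd (hcop.dvd_of_dvd_mul_right hd3)
end

section
/- Let p be a prime and q = p^k with k ≥ 1. Suppose t and b are positive integers with b - t + 1 = p^h for some h ≥ 0, b^2 + b(1-t) - t + t^2 = t·q, and t divides p^h(p^h - 1). Then exactly one of the following holds: (i) t = 1, q is a square, and b = √q; (ii) q is a square, t = q - √q, and b = q - 1; (iii) t = b = q. -/
theorem stmt_4 (p k q t b h : ℕ) (hp : p.Prime) (hk : 1 ≤ k) (hq : q = p ^ k)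
    (ht : 1 ≤ t) (hb : 1 ≤ b)
    (hbt : (b : ℤ) - t + 1 = p ^ h)
    (heq : (b : ℤ) ^ 2 + b * (1 - t) - t + t ^ 2 = t * q)
    (hdvd : t ∣ p ^ h * (p ^ h - 1)) :
    ((t = 1 ∧ ∃ m : ℕ, q = m ^ 2 ∧ b = m) ∨
     (∃ m : ℕ, q = m ^ 2 ∧ t = q - m ∧ b = q - 1) ∨
     (t = q ∧ b = q)) ∧
    ¬((t = 1 ∧ ∃ m : ℕ, q = m ^ 2 ∧ b = m) ∧
      (∃ m : ℕ, q = m ^ 2 ∧ t = q - m ∧ b = q - 1)) ∧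
    ¬((t = 1 ∧ ∃ m : ℕ, q = m ^ 2 ∧ b = m) ∧ (t = q ∧ b = q)) ∧
    ¬((∃ m : ℕ, q = m ^ 2 ∧ t = q - m ∧ b = q - 1) ∧ (t = q ∧ b = q)) := by
  have hp2 : 2 ≤ p := hp.two_le
  have hq2 : 2 ≤ q := by
    have : p ^ 1 ≤ p ^ k := Nat.pow_le_pow_right (by omega) hk
    simpa [hq, pow_one] using le_trans hp2 (by simpa using this)
  refine ⟨?_, ?_, ?_, ?_⟩
  · -- main disjunction
    set s : ℕ := p ^ h with hs
    clear_value s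
    have hs1 : 1 ≤ s := by rw [hs]; exact Nat.one_le_pow _ _ (by omega)
    have hsc : (s : ℤ) = (p : ℤ) ^ h := by rw [hs]; push_cast; ring
    have key : (t : ℤ) * ((q : ℤ) + 1 - (s : ℤ) - (t : ℤ)) = (s : ℤ) * ((s : ℤ) - 1) := by
      rw [hsc]
      linear_combination (-1 : ℤ) * heq + ((b : ℤ) + (p : ℤ) ^ h) * hbt
    have hu0 : (0 : ℤ) ≤ (q : ℤ) + 1 - (s : ℤ) - (t : ℤ) := by
      by_contra hcon
      push_neg at hcon
      have h1 : (1 : ℤ) ≤ (s : ℤ) := by exact_mod_cast hs1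
      have h2 : (1 : ℤ) ≤ (t : ℤ) := by exact_mod_cast ht
      nlinarith [key]
    obtain ⟨u, hu⟩ : ∃ u : ℕ, (u : ℤ) = (q : ℤ) + 1 - (s : ℤ) - (t : ℤ) :=
      ⟨((q : ℤ) + 1 - (s : ℤ) - (t : ℤ)).toNat, Int.toNat_of_nonneg hu0⟩
    have hsum : t + u + s = q + 1 := by
      have : (t : ℤ) + (u : ℤ) + (s : ℤ) = (q : ℤ) + 1 := by rw [hu]; ring
      exact_mod_cast this
    have htu : t * u = s * (s - 1) := by
      have h2 : ((t * u : ℕ) : ℤ) = ((s * (s - 1) : ℕ) : ℤ) := by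
        rw [Nat.cast_mul, Nat.cast_mul, Nat.cast_sub hs1, hu]
        push_cast
        linarith [key]
      exact_mod_cast h2
    have hdvd' : t ∣ s * (s - 1) := hdvd
    rcases Nat.eq_zero_or_pos h with hh0 | hh1
    · -- h = 0 : s = 1, t = q, b = q
      have hs1' : s = 1 := by rw [hs, hh0, pow_zero]
      rw [hs1'] at htu hsum
      simp at htu
      have hu0' : u = 0 := by omega
      have htq : t = q := by omega
      have hbq : b = q := by
        rw [hh0, pow_zero] at hbt
        have hbz : (b : ℤ) = (t : ℤ) := by linarith
        have : b = t := by exact_mod_cast hbz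
        omega
      exact Or.inr (Or.inr ⟨htq, hbq⟩)
    · -- h ≥ 1
      have hps : p ∣ s := by rw [hs]; exact dvd_pow_self p (by omega)
      have hpq : p ∣ q := by rw [hq]; exact dvd_pow_self p (by omega)
      have hs2 : 2 ≤ s := le_trans hp2 (Nat.le_of_dvd (by omega) hps)
      have hu1 : 1 ≤ u := by
        by_contra h0
        push_neg at h0
        have hu0' : u = 0 := by omega
        rw [hu0', Nat.mul_zero] at htu
        rcases Nat.mul_eq_zero.mp htu.symm with h' | h' <;> omega
      have hhk : h ≤ k := by
        by_contra hcon
        push_neg at hcon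
        have : q < s := by
          rw [hq, hs]
          exact Nat.pow_lt_pow_right (by omega) hcon
        omega
      have hsq : s ∣ q := by rw [hq, hs]; exact pow_dvd_pow p hhk
      have hnotboth : ¬ (p ∣ t ∧ p ∣ u) := by
        rintro ⟨h1, h2⟩
        have hd1 : p ∣ q + 1 := hsum ▸ (Dvd.dvd.add (Dvd.dvd.add h1 h2) hps)
        have hp1 : p ∣ 1 := by
          have := Nat.dvd_sub hd1 hpq
          simpa using this
        exact absurd (Nat.dvd_one.mp hp1) (by omega)
      by_cases hpt : p ∣ t
      · -- case (ii): p ∣ t, u = 1, t = q - √q, b = q - 1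
        have hpu : ¬ p ∣ u := fun h2 => hnotboth ⟨hpt, h2⟩
        have hcu : Nat.Coprime u p := ((Nat.Prime.coprime_iff_not_dvd hp).mpr hpu).symm
        have hcus : Nat.Coprime u s := by rw [hs]; exact Nat.Coprime.pow_right h hcu
        have hst : s ∣ t := by
          have h1 : s ∣ t * u := by rw [htu]; exact dvd_mul_right s (s - 1)
          have hc2 : Nat.Coprime s u := by rw [hs]; exact Nat.Coprime.pow_left h hcu.symm
          exact Nat.Coprime.dvd_of_dvd_mul_right hc2 h1
        have hus1 : u ∣ s - 1 := by
          have h1 : u ∣ s * (s - 1) := htu ▸ dvd_mul_left u t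
          exact hcus.dvd_of_dvd_mul_left h1
        have hules : u ≤ s - 1 := Nat.le_of_dvd (by omega) hus1
        have hsd : (s : ℤ) ∣ ((u : ℤ) - 1) := by
          obtain ⟨c, hc⟩ := hst
          obtain ⟨d, hd⟩ := hsq
          refine ⟨(d : ℤ) - c - 1, ?_⟩
          have h1 : (t : ℤ) = (s : ℤ) * c := by exact_mod_cast hc
          have h2 : (q : ℤ) = (s : ℤ) * d := by exact_mod_cast hd
          have h3 : (t : ℤ) + u + s = q + 1 := by exact_mod_cast hsum
          linear_combination h3 - h1 + h2
        have hsu : s ∣ u - 1 := by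
          have : (s : ℤ) ∣ ((u - 1 : ℕ) : ℤ) := by
            rwa [Nat.cast_sub hu1, Nat.cast_one]
          exact_mod_cast this
        have hu1' : u = 1 := by
          have := Nat.eq_zero_of_dvd_of_lt hsu (by omega : u - 1 < s)
          omega
        rw [hu1', Nat.mul_one] at htu
        rw [htu, hu1'] at hsum
        have hqs : q = s ^ 2 := by
          have h6 : s * (s - 1) + s = s * s := by
            have h7 : s - 1 + 1 = s := by omega
            calc s * (s - 1) + s = s * ((s - 1) + 1) := by ring
              _ = s * s := by rw [h7]
          rw [pow_two]
          omega
        refine Or.inr (Or.inl ⟨s, hqs, by omega, ?_⟩)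
        have hbz : (b : ℤ) = (q : ℤ) - 1 := by
          have h3 : ((s * (s - 1) : ℕ) : ℤ) + 1 + (s : ℤ) = (q : ℤ) + 1 := by exact_mod_cast hsum
          have h4 : (t : ℤ) = ((s * (s - 1) : ℕ) : ℤ) := by exact_mod_cast htu
          rw [← hsc] at hbt
          linarith
        have : (b : ℤ) = ((q - 1 : ℕ) : ℤ) := by
          rw [Nat.cast_sub (by omega), Nat.cast_one]; exact hbz
        exact_mod_cast this
      · -- case (i): p ∤ t, t = 1, q = s^2, b = s
        have hct : Nat.Coprime p t := (Nat.Prime.coprime_iff_not_dvd hp).mpr hpt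
        have hct' : Nat.Coprime t s := by rw [hs]; exact Nat.Coprime.pow_right h hct.symm
        have hsu : s ∣ u := by
          have h1 : s ∣ t * u := by rw [htu]; exact dvd_mul_right s (s - 1)
          have hc2 : Nat.Coprime s t := by rw [hs]; exact Nat.Coprime.pow_left h hct
          exact Nat.Coprime.dvd_of_dvd_mul_left hc2 h1
        have hts1 : t ∣ s - 1 := hct'.dvd_of_dvd_mul_left hdvd'
        have htles : t ≤ s - 1 := Nat.le_of_dvd (by omega) hts1
        have hsd : (s : ℤ) ∣ ((t : ℤ) - 1) := by
          obtain ⟨c, hc⟩ := hsu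
          obtain ⟨d, hd⟩ := hsq
          refine ⟨(d : ℤ) - c - 1, ?_⟩
          have h1 : (u : ℤ) = (s : ℤ) * c := by exact_mod_cast hc
          have h2 : (q : ℤ) = (s : ℤ) * d := by exact_mod_cast hd
          have h3 : (t : ℤ) + u + s = q + 1 := by exact_mod_cast hsum
          linear_combination h3 - h1 + h2
        have hst : s ∣ t - 1 := by
          have : (s : ℤ) ∣ ((t - 1 : ℕ) : ℤ) := by
            rwa [Nat.cast_sub ht, Nat.cast_one]
          exact_mod_cast this
        have ht1 : t = 1 := by
          have := Nat.eq_zero_of_dvd_of_lt hst (by omega : t - 1 < s)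
          omega
        rw [ht1, Nat.one_mul] at htu
        rw [ht1, htu] at hsum
        have hqs : q = s ^ 2 := by
          have h6 : s * (s - 1) + s = s * s := by
            have h7 : s - 1 + 1 = s := by omega
            calc s * (s - 1) + s = s * ((s - 1) + 1) := by ring
              _ = s * s := by rw [h7]
          rw [pow_two]
          omega
        refine Or.inl ⟨ht1, s, hqs, ?_⟩
        have hbz : (b : ℤ) = (s : ℤ) := by
          rw [← hsc] at hbt
          have h1 : (t : ℤ) = 1 := by exact_mod_cast ht1
          linarith
        exact_mod_cast hbz
  · rintro ⟨⟨ht1, m1, hq1, hb1⟩, m2, hq2', ht2, hb2⟩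
    have hb' : b + 1 = q := by omega
    have hm : m1 + 1 = m1 ^ 2 := by omega
    have hmm : m1 ^ 2 = m1 * m1 := sq m1
    have h2 : m1 * m1 = m1 + 1 := by omega
    rcases Nat.lt_or_ge m1 2 with hc | hc
    · interval_cases m1 <;> omega
    · nlinarith [h2, hc]
  · rintro ⟨⟨ht1, _⟩, htq, _⟩
    omega
  · rintro ⟨⟨m, hqm, htm, hbm⟩, htq, hbq⟩
    omega
end

section
/- Let p be a prime and suppose p^h · (p^h + α·p^l - 1) - α·p^l + α^2·p^{2l} = α·p^l·p^k with gcd(α,p) = 1, 1 ≤ l < h, and k ≥ 1. Then p divides α (contradicting gcd(α,p) = 1), so no solutions exist with l < h and l ≥ 1. -/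
theorem stmt_13 (p α l h k : ℕ) (hp : p.Prime) (hgcd : Nat.gcd α p = 1)
    (hl : 1 ≤ l) (hlh : l < h) (hk : 1 ≤ k)
    (heq : (p : ℤ) ^ h * ((p : ℤ) ^ h + α * p ^ l - 1) - α * p ^ l + α ^ 2 * p ^ (2 * l)
      = α * p ^ l * p ^ k) : False := by
  have hdvd : (p : ℤ) ^ (l + 1) ∣ (α : ℤ) * p ^ l := by
    have h2 : (p : ℤ) ^ (l + 1) ∣ (α : ℤ) ^ 2 * p ^ (2 * l) :=
      Dvd.dvd.mul_left (pow_dvd_pow _ (by omega)) _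
    have h3 : (p : ℤ) ^ (l + 1) ∣ (α : ℤ) * p ^ l * p ^ k := by
      have h4 : (p : ℤ) ^ (l + 1) ∣ (p : ℤ) ^ l * p ^ k := by
        rw [← pow_add]; exact pow_dvd_pow _ (by omega)
      exact h4.trans (by rw [mul_assoc]; exact Dvd.dvd.mul_left dvd_rfl _)
    have key : (α : ℤ) * p ^ l
        = (p : ℤ) ^ h * ((p : ℤ) ^ h + α * p ^ l - 1) + α ^ 2 * p ^ (2 * l)
          - α * p ^ l * p ^ k := by linarith
    rw [key]
    exact dvd_sub (dvd_add (Dvd.dvd.mul_right (pow_dvd_pow _ hlh) _) h2) h3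
  have hpne : (p : ℤ) ^ l ≠ 0 := by
    have := hp.pos; positivity
  have hpα : (p : ℤ) ∣ (α : ℤ) := by
    rw [pow_succ, mul_comm (α:ℤ) ((p:ℤ)^l)] at hdvd
    exact (mul_dvd_mul_iff_left hpne).mp hdvd
  have : (p : ℕ) ∣ α := Int.ofNat_dvd.mp (by exact_mod_cast hpα)
  have : p ∣ 1 := hgcd ▸ Nat.dvd_gcd this dvd_rfl
  exact hp.one_lt.ne' (Nat.dvd_one.mp this)
end

section
/- Let q be a prime power. There is no integer t with 1 < t < q, t ≠ q - √q (when q is a square), for which there exist integers b ≥ t satisfying both b - t + 1 = p^h (a power of the prime p dividing q) and b^2 + b(1-t) - t + t^2 = t·q. -/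
lemma aux16 (p h k : ℕ) (hp : p.Prime) (h1 : 1 ≤ h) (hhk : h < k) (x y : ℤ)
    (hx : 1 ≤ x) (hy : 1 ≤ y) (hd : ((p:ℤ))^h ∣ x)
    (hprod : x * y = (p:ℤ)^h * ((p:ℤ)^h - 1))
    (hsum : x + y = (p:ℤ)^k + 1 - (p:ℤ)^h) :
    (p:ℤ)^k = ((p:ℤ)^h)^2 ∧ x = (p:ℤ)^k - (p:ℤ)^h ∧ y = 1 := by
  set d : ℤ := (p:ℤ)^h with hdd
  have hp2 : (2:ℤ) ≤ (p:ℤ) := by exact_mod_cast hp.two_le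
  have hd2 : 2 ≤ d := by
    calc (2:ℤ) ≤ (p:ℤ) := hp2
    _ = (p:ℤ)^1 := (pow_one _).symm
    _ ≤ (p:ℤ)^h := pow_le_pow_right₀ (by linarith) h1
  obtain ⟨u, hu⟩ := hd
  have hu1 : 1 ≤ u := by nlinarith
  have huy : u * y = d - 1 := by
    have hdne : d ≠ 0 := by linarith
    have : d * (u * y) = d * (d - 1) := by rw [← hprod, hu]; ring
    exact mul_left_cancel₀ hdne this
  have hud : u ≤ d - 1 := by nlinarith
  have hdk : d ∣ (p:ℤ)^k := pow_dvd_pow _ hhk.le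
  have hkey : d * (u^2 + u + 1) = u * (p:ℤ)^k + u + 1 := by
    have := hsum
    rw [hu] at this
    nlinarith [this, huy]
  have hdu1 : d ∣ u + 1 := by
    have : u + 1 = d * (u^2 + u + 1) - u * (p:ℤ)^k := by linarith
    rw [this]
    exact dvd_sub (Dvd.intro _ rfl) (Dvd.dvd.mul_left hdk u)
  have hueq : u + 1 = d := le_antisymm (by linarith) (Int.le_of_dvd (by linarith) hdu1)
  have hy1 : y = 1 := by nlinarith
  have hqd : (p:ℤ)^k = d^2 := by nlinarith [hkey, hueq]
  refine ⟨hqd, ?_, hy1⟩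
  rw [hu]; nlinarith

theorem stmt_16 (p k q : ℕ) (hp : p.Prime) (hk : 1 ≤ k) (hq : q = p ^ k) :
    ¬ ∃ (t b h : ℕ), 1 < t ∧ t < q ∧ (∀ m : ℕ, q = m ^ 2 → t ≠ q - m) ∧
      t ≤ b ∧ (b : ℤ) - t + 1 = p ^ h ∧
      (b : ℤ) ^ 2 + b * (1 - t) - t + t ^ 2 = t * q := by
  rintro ⟨t, b, h, ht1, htq, hsq, htb, hbs, heq⟩
  have hp2 : (2:ℤ) ≤ (p:ℤ) := by exact_mod_cast hp.two_le
  have hp2n : 2 ≤ p := hp.two_le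
  set S : ℤ := (p:ℤ)^h with hS
  set Q : ℤ := (p:ℤ)^k with hQ
  have hqQ : (q:ℤ) = Q := by rw [hq]; push_cast; rfl
  have hT1 : (1:ℤ) < (t:ℤ) := by exact_mod_cast ht1
  have hTQ : (t:ℤ) < Q := by rw [← hqQ]; exact_mod_cast htq
  -- key quadratic equation
  have hE : (t:ℤ)^2 + (S - Q - 1) * t + S * (S - 1) = 0 := by
    have hb : (b:ℤ) = S + t - 1 := by linarith [hbs]
    rw [← hqQ]
    nlinarith [heq, hb]
  set T' : ℤ := Q + 1 - S - (t:ℤ) with hT'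
  have hprod : (t:ℤ) * T' = S * (S - 1) := by rw [hT']; nlinarith [hE]
  -- h ≥ 1
  have hh1 : 1 ≤ h := by
    by_contra hh
    have h0 : h = 0 := by omega
    rw [h0] at hS
    simp at hS
    rw [hS] at hprod
    have : (t:ℤ) * T' = 0 := by rw [hprod]; ring
    have hT'0 : T' = 0 := by
      rcases mul_eq_zero.mp this with h' | h'
      · linarith
      · exact h'
    rw [hS] at hT'
    have : (t:ℤ) = Q := by linarith [hT'.symm, hT'0]
    linarith
  have hS2 : (2:ℤ) ≤ S := by
    calc (2:ℤ) ≤ (p:ℤ) := hp2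
    _ = (p:ℤ)^1 := (pow_one _).symm
    _ ≤ (p:ℤ)^h := pow_le_pow_right₀ (by linarith) hh1
  have hT'1 : 1 ≤ T' := by
    rcases lt_or_ge T' 1 with h' | h'
    · exfalso
      have hT'0 : T' ≤ 0 := by omega
      nlinarith [hprod]
    · exact h'
  -- h < k
  have hhk : h < k := by
    have hSQ : S < Q := by
      have : (t:ℤ) + T' = Q + 1 - S := by rw [hT']; ring
      linarith
    have h2 : ((p^h:ℕ):ℤ) < ((p^k:ℕ):ℤ) := by push_cast; exact hSQ
    exact (Nat.pow_lt_pow_iff_right hp2n).mp (by exact_mod_cast h2)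
  have hSdQ : S ∣ Q := pow_dvd_pow _ hhk.le
  -- p^h ∣ t(t-1)
  have hdvd : S ∣ (t:ℤ) * ((t:ℤ) - 1) := by
    have : (t:ℤ) * ((t:ℤ) - 1) = (t:ℤ) * (Q - S) - S * (S - 1) := by
      rw [← hprod, hT']; ring
    rw [this]
    exact dvd_sub (Dvd.dvd.mul_left (dvd_sub hSdQ dvd_rfl) _) (Dvd.intro _ rfl)
  have hdvdN : p^h ∣ t * (t - 1) := by
    have : ((p^h : ℕ) : ℤ) ∣ ((t * (t-1) : ℕ) : ℤ) := by
      push_cast [Nat.cast_sub ht1.le]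
      convert hdvd using 2 <;> push_cast <;> ring_nf
    exact_mod_cast this
  have hsplit : p^h ∣ t ∨ p^h ∣ (t - 1) := by
    by_cases hpt : p ∣ t
    · left
      have hcop : Nat.Coprime p (t - 1) := hp.coprime_iff_not_dvd.mpr (fun hd1 => by
        have hds : p ∣ t - (t-1) := Nat.dvd_sub hpt hd1
        rw [show t - (t-1) = 1 by omega] at hds
        have := Nat.dvd_one.mp hds
        omega)
      exact (Nat.Coprime.pow_left h hcop).dvd_of_dvd_mul_right hdvdN
    · right
      have hcop : Nat.Coprime (p^h) t := Nat.Coprime.pow_left h (hp.coprime_iff_not_dvd.mpr hpt)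
      exact hcop.dvd_of_dvd_mul_left hdvdN
  rcases hsplit with hc | hc
  · -- p^h ∣ t : apply aux with x = t, y = T'
    have hdZ : S ∣ (t:ℤ) := by
      have h1 := Int.natCast_dvd_natCast.mpr hc
      push_cast at h1; rw [hS]; exact h1
    obtain ⟨hqd, hxeq, -⟩ := aux16 p h k hp hh1 hhk (t:ℤ) T' (by linarith) hT'1 hdZ hprod
      (by rw [hT']; ring)
    -- q = (p^h)^2 and t = q - p^h
    have hq2 : q = (p^h)^2 := by
      have : (q:ℤ) = ((p^h:ℕ):ℤ)^2 := by rw [hqQ, hQ, hqd]; push_cast; ring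
      exact_mod_cast this
    have hple : p^h ≤ q := by
      have : (p^h : ℤ) ≤ (q:ℤ) := by rw [hqQ]; push_cast; linarith [hS2, hqd, sq_nonneg (S-1)]
      exact_mod_cast this
    have : t = q - p^h := by
      have : (t:ℤ) = ((q - p^h : ℕ) : ℤ) := by
        rw [Nat.cast_sub hple, hqQ, hxeq]; push_cast; ring
      exact_mod_cast this
    exact hsq (p^h) hq2 this
  · -- p^h ∣ t - 1 : apply aux with x = T', y = t
    have hdZ : S ∣ T' := by
      have h1 : S ∣ (t:ℤ) - 1 := by
        have h2 := Int.natCast_dvd_natCast.mpr hc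
        rw [Nat.cast_sub ht1.le] at h2
        push_cast at h2; rw [hS]; exact h2
      have : T' = (Q - S) - ((t:ℤ) - 1) := by rw [hT']; ring
      rw [this]
      exact dvd_sub (dvd_sub hSdQ dvd_rfl) h1
    obtain ⟨-, -, hy1⟩ := aux16 p h k hp hh1 hhk T' (t:ℤ) hT'1 (by linarith) hdZ
      (by rw [← hprod]; ring) (by rw [hT']; ring)
    linarith
end
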